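/- arXiv:1208.1945 — 4 statements merged into one kernel-verified Lean document; each statement's English description precedes it below -/
import Mathlib

section
/- Let K be a field with a valuation v as below, let s = diag(s₁,…,s_m) with s₁,…,s_m ∈ K^×, and let u ∈ GL_m(K). Then for every 0 ≤ j ≤ m, the coefficient of X^{m−j} in the characteristic polynomial det(X·1_m − s·u) of the matrix s·u has valuation at least j·( min_{1≤i≤m} v(sᵢ) + v_min(u) ). -/
/-!
The coefficient of `X ^ (m - j)` in the characteristic polynomial of an `m × m` matrix `M` is the
value at the entries of `M` of a homogeneous integer polynomial of degree `j` (the coefficient of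
the universal characteristic polynomial). If every entry has valuation at least `c`, each monomial
of degree `j` in them has valuation at least `j • c`, integers have nonnegative valuation, and the
ultrametric inequality passes the bound to the sum. The entries of `diag(s) * u` are `sᵢ uᵢₖ`, of
valuation at least `min v(sᵢ) + v_min(u)`.
-/

/-- `v_min(M) = min_{i,j} v(M_{ij})` for a matrix `M`. -/
noncomputable def vminMatrix {K : Type*} [Field K] {m : ℕ} [NeZero m]
    (v : K → WithTop ℝ) (M : Matrix (Fin m) (Fin m) K) : WithTop ℝ :=
  Finset.univ.inf' Finset.univ_nonempty fun q : Fin m × Fin m => v (M q.1 q.2)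

/-- `min_{1 ≤ i ≤ m} v(s_i)`. -/
noncomputable def vminVec {K : Type*} [Field K] {m : ℕ} [NeZero m]
    (v : K → WithTop ℝ) (s : Fin m → K) : WithTop ℝ :=
  Finset.univ.inf' Finset.univ_nonempty fun i : Fin m => v (s i)

namespace AddValuation

variable {R Γ₀ : Type*} [CommRing R] [LinearOrderedAddCommMonoidWithTop Γ₀]
  (v : AddValuation R Γ₀)

theorem natCast_nonneg (n : ℕ) : 0 ≤ v n := by
  induction n with
  | zero => simp
  | succ n ih => exact (Nat.cast_succ (R := R) n).symm ▸ v.map_le_add ih v.map_one.ge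

theorem intCast_nonneg (n : ℤ) : 0 ≤ v n := by
  cases n with
  | ofNat n => simpa using v.natCast_nonneg n
  | negSucc n => simpa only [Int.cast_negSucc, map_neg] using v.natCast_nonneg (n + 1)

theorem sum_nsmul_le_prod_pow {σ : Type*} (t : Finset σ) (e : σ → ℕ) {x : σ → R} {c : Γ₀}
    (hx : ∀ i ∈ t, c ≤ v (x i)) : (∑ i ∈ t, e i) • c ≤ v (∏ i ∈ t, x i ^ e i) := by
  induction t using Finset.cons_induction with
  | empty => simp
  | cons a t ha ih =>
    rw [Finset.sum_cons, Finset.prod_cons, add_smul, map_mul, map_pow]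
    exact add_le_add (nsmul_le_nsmul_right (hx a (t.mem_cons_self a)) _)
      (ih fun i hi ↦ hx i (Finset.mem_cons_of_mem hi))

theorem nsmul_le_eval₂_of_isHomogeneous {S σ : Type*} [CommSemiring S] (f : S →+* R)
    (hf : ∀ a, 0 ≤ v (f a)) {φ : MvPolynomial σ S} {j : ℕ} (hφ : φ.IsHomogeneous j)
    {x : σ → R} {c : Γ₀} (hx : ∀ i, c ≤ v (x i)) : j • c ≤ v (φ.eval₂ f x) := by
  rw [MvPolynomial.eval₂_eq]
  refine v.map_le_sum fun d hd ↦ ?_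
  rw [map_mul, hφ.degree_eq_sum_deg_support hd, ← zero_add (_ • c)]
  exact add_le_add (hf _) (v.sum_nsmul_le_prod_pow _ _ fun i _ ↦ hx i)

theorem nsmul_le_charpoly_coeff {n : Type*} [Fintype n] [DecidableEq n] {M : Matrix n n R}
    {c : Γ₀} (hM : ∀ i k, c ≤ v (M i k)) {i j : ℕ} (hij : i + j = Fintype.card n) :
    j • c ≤ v (M.charpoly.coeff i) := by
  have hcharpoly :=
    Matrix.charpoly.univ_map_eval₂Hom n (Int.castRingHom R) fun p : n × n ↦ M p.1 p.2
  rw [show Matrix.of (Function.curry fun p : n × n ↦ M p.1 p.2) = M from rfl] at hcharpoly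
  rw [← hcharpoly, Polynomial.coeff_map, MvPolynomial.coe_eval₂Hom]
  exact v.nsmul_le_eval₂_of_isHomogeneous _ v.intCast_nonneg
    (Matrix.charpoly.univ_coeff_isHomogeneous ℤ n i j hij) fun p ↦ hM p.1 p.2

end AddValuation

theorem vminVec_le {K : Type*} [Field K] {m : ℕ} [NeZero m] (v : K → WithTop ℝ)
    (s : Fin m → K) (i : Fin m) : vminVec v s ≤ v (s i) :=
  Finset.inf'_le _ (Finset.mem_univ i)

theorem vminMatrix_le {K : Type*} [Field K] {m : ℕ} [NeZero m] (v : K → WithTop ℝ)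
    (M : Matrix (Fin m) (Fin m) K) (i k : Fin m) : vminMatrix v M ≤ v (M i k) :=
  Finset.inf'_le (fun q : Fin m × Fin m ↦ v (M q.1 q.2)) (Finset.mem_univ (i, k))

theorem stmt1_general {K : Type*} [Field K] {m : ℕ} [NeZero m]
    (v : K → WithTop ℝ)
    (hv_top : ∀ x : K, v x = ⊤ ↔ x = 0)
    (hv_mul : ∀ x y : K, v (x * y) = v x + v y)
    (hv_add : ∀ x y : K, min (v x) (v y) ≤ v (x + y))
    (s : Fin m → K)
    (u : (Matrix (Fin m) (Fin m) K)ˣ)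
    (j : ℕ) (hj : j ≤ m) :
    j • (vminVec v s + vminMatrix v (u : Matrix (Fin m) (Fin m) K)) ≤
      v ((Matrix.charpoly (Matrix.diagonal s * (u : Matrix (Fin m) (Fin m) K))).coeff (m - j)) := by
  have hv_one : v 1 = 0 := by
    have hv_one_ne_top : v 1 ≠ ⊤ := (hv_top 1).not.2 one_ne_zero
    exact (WithTop.add_left_inj hv_one_ne_top).1 (by rw [add_zero, ← hv_mul, mul_one])
  let V : AddValuation K (WithTop ℝ) := .of v ((hv_top 0).2 rfl) hv_one hv_add hv_mul
  have hentry : ∀ i k, vminVec v s + vminMatrix v (u : Matrix (Fin m) (Fin m) K) ≤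
      V ((Matrix.diagonal s * (u : Matrix (Fin m) (Fin m) K)) i k) := fun i k ↦ by
    rw [Matrix.diagonal_mul, AddValuation.of_apply, hv_mul]
    exact add_le_add (vminVec_le v s i) (vminMatrix_le v _ i k)
  exact V.nsmul_le_charpoly_coeff hentry (by rw [Fintype.card_fin]; omega)

theorem stmt1 {K : Type*} [Field K] {m : ℕ} [NeZero m]
    (v : K → WithTop ℝ)
    (hv_top : ∀ x : K, v x = ⊤ ↔ x = 0)
    (hv_mul : ∀ x y : K, v (x * y) = v x + v y)
    (hv_add : ∀ x y : K, min (v x) (v y) ≤ v (x + y))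
    (s : Fin m → K) (hs : ∀ i, s i ≠ 0)
    (u : (Matrix (Fin m) (Fin m) K)ˣ)
    (j : ℕ) (hj : j ≤ m) :
    j • (vminVec v s + vminMatrix v (u : Matrix (Fin m) (Fin m) K)) ≤
      v ((Matrix.charpoly (Matrix.diagonal s * (u : Matrix (Fin m) (Fin m) K))).coeff (m - j)) :=
  stmt1_general v hv_top hv_mul hv_add s u j hj
end

section
/- Let K be a field with a valuation v as below, let s = diag(s₁,…,s_m) with s₁,…,s_m ∈ K^×, and let u ∈ GL_m(K). Then every eigenvalue λ ∈ K of the matrix s·u (i.e., every root λ ∈ K of the characteristic polynomial of s·u) satisfies v_min(u) + min_{1≤i≤m} v(sᵢ) ≤ v(λ) ≤ −v_min(u^{−1}) + max_{1≤i≤m} v(sᵢ). -/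
/-- `max_{1 ≤ i ≤ m} v(s_i)`. -/
noncomputable def vmaxVec {K : Type*} [Field K] {m : ℕ} [NeZero m]
    (v : K → WithTop ℝ) (s : Fin m → K) : WithTop ℝ :=
  Finset.univ.sup' Finset.univ_nonempty fun i : Fin m => v (s i)

open Matrix

theorem Matrix.exists_mulVec_eq_smul_of_isRoot_charpoly {K n : Type*} [Field K] [Fintype n]
    [DecidableEq n] {A : Matrix n n K} {μ : K} (h : A.charpoly.IsRoot μ) :
    ∃ x : n → K, x ≠ 0 ∧ A *ᵥ x = μ • x := by
  rw [← charpoly_toLin', ← Module.End.hasEigenvalue_iff_isRoot_charpoly] at h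
  obtain ⟨x, hx⟩ := h.exists_hasEigenvector
  exact ⟨x, hx.2, by simpa using hx.apply_eq_smul⟩

namespace AddValuation

noncomputable def ofWithTopReal {K : Type*} [Field K] (v : K → WithTop ℝ)
    (hv_top : ∀ x : K, v x = ⊤ ↔ x = 0) (hv_mul : ∀ x y : K, v (x * y) = v x + v y)
    (hv_add : ∀ x y : K, min (v x) (v y) ≤ v (x + y)) : AddValuation K (WithTop ℝ) :=
  AddValuation.of v ((hv_top 0).2 rfl)
    (WithTop.add_left_cancel (x := v 1) (by simp [hv_top]) (by simpa using (hv_mul 1 1).symm))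
    hv_add hv_mul

variable {K : Type*} [Field K] {m : ℕ} [NeZero m] (v : AddValuation K (WithTop ℝ))

theorem vminMatrix_add_le_mulVec (M : Matrix (Fin m) (Fin m) K) {x : Fin m → K}
    {c : WithTop ℝ} (hx : ∀ j, c ≤ v (x j)) (i : Fin m) :
    vminMatrix v M + c ≤ v ((M *ᵥ x) i) := by
  rw [mulVec, dotProduct]
  refine v.map_le_sum fun j _ => ?_
  rw [v.map_mul]
  exact add_le_add (Finset.inf'_le _ (Finset.mem_univ (i, j))) (hx j)

theorem exists_ne_top_forall_le {x : Fin m → K} (hx : x ≠ 0) :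
    ∃ i, v (x i) ≠ ⊤ ∧ ∀ j, v (x i) ≤ v (x j) := by
  obtain ⟨i, -, hi⟩ := Finset.univ.exists_min_image (fun j => v (x j)) Finset.univ_nonempty
  obtain ⟨j, hj⟩ := Function.ne_iff.1 hx
  exact ⟨i, fun h => hj (v.top_iff.1 (top_le_iff.1 (h ▸ hi j (Finset.mem_univ j)))),
    fun j => hi j (Finset.mem_univ j)⟩

theorem vminMatrix_add_vminVec_le_of_eigenvector (s : Fin m → K) (U : Matrix (Fin m) (Fin m) K)
    {x : Fin m → K} (hx0 : x ≠ 0) {μ : K} (hx : (diagonal s * U) *ᵥ x = μ • x) :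
    vminMatrix v U + vminVec v s ≤ v μ := by
  obtain ⟨i, hi_top, hi_min⟩ := v.exists_ne_top_forall_le hx0
  have hi : s i * (U *ᵥ x) i = μ * x i := by
    simpa [← mulVec_mulVec, mulVec_diagonal] using congrFun hx i
  refine (WithTop.add_le_add_iff_right hi_top).1 ?_
  calc vminMatrix v U + vminVec v s + v (x i)
      = vminVec v s + (vminMatrix v U + v (x i)) := by abel
    _ ≤ v (s i) + v ((U *ᵥ x) i) :=
      add_le_add (Finset.inf'_le _ (Finset.mem_univ i)) (v.vminMatrix_add_le_mulVec U hi_min i)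
    _ = v μ + v (x i) := by rw [← v.map_mul, hi, v.map_mul]

theorem add_vminMatrix_le_vmaxVec_of_eigenvector (s : Fin m → K)
    {U U' : Matrix (Fin m) (Fin m) K} (hU : U' * U = 1)
    {x : Fin m → K} (hx0 : x ≠ 0) {μ : K} (hx : (diagonal s * U) *ᵥ x = μ • x) :
    v μ + vminMatrix v U' ≤ vmaxVec v s := by
  obtain ⟨i, hi_top, hi_min⟩ := v.exists_ne_top_forall_le hx0
  set y := U *ᵥ x
  have hy : ∀ j, s j * y j = μ * x j := fun j => by
    simpa [y, ← mulVec_mulVec, mulVec_diagonal] using congrFun hx j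
  have hxy : x = U' *ᵥ y := by rw [mulVec_mulVec, hU, one_mulVec]
  obtain ⟨j, -, hj⟩ := Finset.univ.exists_min_image (fun j => v (y j)) Finset.univ_nonempty
  have hxi : vminMatrix v U' + v (y j) ≤ v (x i) := by
    rw [hxy]
    exact v.vminMatrix_add_le_mulVec U' (fun k => hj k (Finset.mem_univ k)) i
  refine (WithTop.add_le_add_iff_right hi_top).1 ?_
  calc v μ + vminMatrix v U' + v (x i)
      ≤ vminMatrix v U' + (v μ + v (x j)) := by
        rw [add_right_comm, add_comm]; gcongr; exact hi_min j
    _ = vminMatrix v U' + v (y j) + v (s j) := by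
        rw [← v.map_mul, ← hy, v.map_mul]; abel
    _ ≤ v (x i) + vmaxVec v s :=
      add_le_add hxi (Finset.le_sup' (fun k => v (s k)) (Finset.mem_univ j))
    _ = vmaxVec v s + v (x i) := add_comm _ _

end AddValuation

/-- The upper bound `v(λ) ≤ -v_min(u⁻¹) + max_i v(s_i)` is written as
`v(λ) + v_min(u⁻¹) ≤ max_i v(s_i)`, which needs no negation in `WithTop ℝ`. -/
theorem stmt2_general {K : Type*} [Field K] {m : ℕ} [NeZero m]
    (v : K → WithTop ℝ)
    (hv_top : ∀ x : K, v x = ⊤ ↔ x = 0)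
    (hv_mul : ∀ x y : K, v (x * y) = v x + v y)
    (hv_add : ∀ x y : K, min (v x) (v y) ≤ v (x + y))
    (s : Fin m → K)
    (u : (Matrix (Fin m) (Fin m) K)ˣ)
    (lam : K)
    (hlam : (Matrix.charpoly (Matrix.diagonal s * (u : Matrix (Fin m) (Fin m) K))).IsRoot lam) :
    vminMatrix v (u : Matrix (Fin m) (Fin m) K) + vminVec v s ≤ v lam ∧
    v lam + vminMatrix v ((u⁻¹ : (Matrix (Fin m) (Fin m) K)ˣ) : Matrix (Fin m) (Fin m) K) ≤
      vmaxVec v s := by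
  let w := AddValuation.ofWithTopReal v hv_top hv_mul hv_add
  obtain ⟨x, hx0, hx⟩ := exists_mulVec_eq_smul_of_isRoot_charpoly hlam
  exact ⟨w.vminMatrix_add_vminVec_le_of_eigenvector s _ hx0 hx,
    w.add_vminMatrix_le_vmaxVec_of_eigenvector s u.inv_mul hx0 hx⟩

/-- Every eigenvalue `λ ∈ K` of `s·u` (a root of the characteristic polynomial of `s·u`)
satisfies `v_min(u) + min_i v(s_i) ≤ v(λ)` and `v(λ) ≤ -v_min(u⁻¹) + max_i v(s_i)`, the
latter inequality being written in the equivalent form `v(λ) + v_min(u⁻¹) ≤ max_i v(s_i)`. -/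
theorem stmt2 {K : Type*} [Field K] {m : ℕ} [NeZero m]
    (v : K → WithTop ℝ)
    (hv_top : ∀ x : K, v x = ⊤ ↔ x = 0)
    (hv_mul : ∀ x y : K, v (x * y) = v x + v y)
    (hv_add : ∀ x y : K, min (v x) (v y) ≤ v (x + y))
    (s : Fin m → K) (hs : ∀ i, s i ≠ 0)
    (u : (Matrix (Fin m) (Fin m) K)ˣ)
    (lam : K)
    (hlam : (Matrix.charpoly (Matrix.diagonal s * (u : Matrix (Fin m) (Fin m) K))).IsRoot lam) :
    vminMatrix v (u : Matrix (Fin m) (Fin m) K) + vminVec v s ≤ v lam ∧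
    v lam + vminMatrix v ((u⁻¹ : (Matrix (Fin m) (Fin m) K)ˣ) : Matrix (Fin m) (Fin m) K) ≤
      vmaxVec v s :=
  stmt2_general v hv_top hv_mul hv_add s u lam hlam
end

section
/- Let p be a prime, F a finite extension of ℚ_p, and E a finite Galois extension of F. Then for every σ ∈ Gal(E/F) with σ ≠ 1 there exists x ∈ 𝒪_E such that v_E(σ(x) − x) ≤ [E:F]·(1 + e_{F/ℚ_p}·log_p [E:F]) − 1. Equivalently, the i-th ramification group Gal(E/F)_i in lower numbering is trivial for every integer i ≥ [E:F]·(1 + e_{F/ℚ_p}·log_p [E:F]) − 1. -/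
/-!
Let `τ` be the restriction of `σ` to `𝒪_E`, `n = [E:F]` and `ϖ` a uniformizer of `F`. If `τ ≡ 1`
modulo `n ϖ`, then summing the congruences `τ^k x ≡ x` shows that `n x` is congruent modulo `n ϖ`
to the `τ`-invariant element `∑ k < n, τ^k x`, so every `x` is congruent modulo `ϖ` to a
`τ`-invariant element. As `ϖ` is `τ`-invariant, this bootstraps to `τ ≡ 1` modulo every power of
`ϖ`, i.e. `τ = 1`.

The bound on `i` is what makes `n ϖ` divide `π^(i+1)`: `v_E(n) = v_p(n) v_E(p)` with
`v_p(n) ≤ log_p n` and `v_E(p) ≤ e_{F/ℚ_p} e_{E/F}`, and `e_{E/F} ≤ n` because the norm of `π`,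
a product of `n` conjugates of `π`, lies in `𝒪_F`.
-/

open Finset IsLocalRing Module

namespace AlgEquiv

variable {R B : Type*} [CommSemiring R] [CommRing B] [Algebra R B] (τ : B ≃ₐ[R] B)

theorem dvd_pow_apply_sub_self {d : B} (h : ∀ x, d ∣ τ x - x) (k : ℕ) (x : B) :
    d ∣ (τ ^ k) x - x := by
  induction k with
  | zero => simp
  | succ k ih =>
    have : (τ ^ (k + 1)) x - x = (τ ((τ ^ k) x) - (τ ^ k) x) + ((τ ^ k) x - x) := by
      rw [pow_succ', mul_apply]; ring
    exact this ▸ dvd_add (h _) ih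

theorem apply_sum_range_pow_apply {n : ℕ} (hn : τ ^ n = 1) (x : B) :
    τ (∑ k ∈ range n, (τ ^ k) x) = ∑ k ∈ range n, (τ ^ k) x := by
  rw [← sub_eq_zero, map_sum, ← sum_sub_distrib]
  simp_rw [← mul_apply, ← pow_succ']
  rw [sum_range_sub (fun k ↦ (τ ^ k) x), hn, pow_zero, sub_self]

theorem exists_apply_eq_self_dvd_sub [IsDomain B] {n : ℕ} (hn : τ ^ n = 1) (hn0 : (n : B) ≠ 0)
    {t : B} (h : ∀ x, (n : B) * t ∣ τ x - x) (x : B) : ∃ c, τ c = c ∧ t ∣ x - c := by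
  obtain ⟨q, hq⟩ : (n : B) * t ∣ ∑ k ∈ range n, (τ ^ k) x - n * x := by
    have := dvd_sum fun k (_ : k ∈ range n) ↦ τ.dvd_pow_apply_sub_self h k x
    rwa [sum_sub_distrib, sum_const, card_range, nsmul_eq_mul] at this
  have hc : (n : B) * (x + t * q) = ∑ k ∈ range n, (τ ^ k) x := by linear_combination -hq
  refine ⟨x + t * q, mul_left_cancel₀ hn0 ?_, ⟨-q, by ring⟩⟩
  rw [hc, ← τ.apply_sum_range_pow_apply hn, ← hc, map_mul, map_natCast]

theorem pow_dvd_apply_sub_self {t : B} (ht : τ t = t)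
    (h : ∀ x, ∃ c, τ c = c ∧ t ∣ x - c) (k : ℕ) (x : B) : t ^ k ∣ τ x - x := by
  induction k generalizing x with
  | zero => simp
  | succ k ih =>
    obtain ⟨c, hc, b, hb⟩ := h x
    have : τ x - x = t * (τ b - b) := by
      rw [sub_eq_iff_eq_add'.mp hb, map_add, map_mul, hc, ht]; ring
    rw [this, pow_succ']
    exact mul_dvd_mul_left t (ih b)

theorem eq_one_of_natCast_mul_dvd_apply_sub_self [IsDomain B] [WfDvdMonoid B] {n : ℕ}
    (hn : τ ^ n = 1) {t : B} (ht : τ t = t) (ht' : ¬IsUnit t) (hnt : (n : B) * t ≠ 0)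
    (h : ∀ x, (n : B) * t ∣ τ x - x) : τ = 1 := by
  ext x
  by_contra hx
  obtain ⟨k, hk⟩ := FiniteMultiplicity.of_not_isUnit ht' (sub_ne_zero.mpr hx)
  exact hk <| τ.pow_dvd_apply_sub_self ht
    (τ.exists_apply_eq_self_dvd_sub hn (left_ne_zero_of_mul hnt) h) (k + 1) x

end AlgEquiv

theorem associated_pow_factorization_natCast {p : ℕ} [Fact p.Prime] {A : Type*} [CommRing A]
    [Algebra ℤ_[p] A] {n : ℕ} (hn : n ≠ 0) : Associated ((p : A) ^ n.factorization p) n := by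
  have hu : IsUnit ((n / p ^ n.factorization p : ℕ) : ℤ_[p]) := by
    rw [PadicInt.isUnit_iff, PadicInt.norm_natCast_eq_one_iff]
    exact Nat.coprime_ordCompl Fact.out hn
  refine ⟨(hu.map (algebraMap ℤ_[p] A)).unit, ?_⟩
  rw [IsUnit.unit_spec, map_natCast, ← Nat.cast_pow, ← Nat.cast_mul,
    Nat.ordProj_mul_ordCompl_eq_self]

theorem IsDiscreteValuationRing.dvd_pow_of_notMem_maximalIdeal_pow_succ {A : Type*} [CommRing A]
    [IsDomain A] [IsDiscreteValuationRing A] {ϖ : A} (hϖ : Irreducible ϖ) {x : A} {e : ℕ}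
    (hx : x ∉ IsLocalRing.maximalIdeal A ^ (e + 1)) : x ∣ ϖ ^ e := by
  rw [(irreducible_iff_uniformizer ϖ).mp hϖ, Ideal.span_singleton_pow,
    Ideal.mem_span_singleton] at hx
  obtain ⟨k, u, rfl⟩ := eq_unit_mul_pow_irreducible (x := x) (by rintro rfl; simp at hx) hϖ
  refine (Units.mul_left_dvd).mpr (pow_dvd_pow ϖ ?_)
  by_contra! hk
  exact hx ((pow_dvd_pow ϖ hk).mul_left _)

theorem Nat.factorization_le_logb {p n : ℕ} (hp : p.Prime) (hn : n ≠ 0) :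
    (n.factorization p : ℝ) ≤ Real.logb p n := by
  rw [Real.le_logb_iff_rpow_le (by exact_mod_cast hp.one_lt) (by positivity), Real.rpow_natCast]
  exact_mod_cast Nat.ordProj_le p hn

section Norm

variable {A K L B : Type*} [CommRing A] [CommRing B] [Algebra A B] [Field K] [Field L]
  [Algebra A K] [IsFractionRing A K] [Algebra K L] [Algebra A L] [IsScalarTower A K L]
  [Algebra B L] [IsScalarTower A B L] [IsIntegralClosure B A L] [FiniteDimensional K L]
  [IsGalois K L] [IsIntegrallyClosed A] [IsDomain B] [IsDiscreteValuationRing B]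

variable (A K L) in
theorem exists_algebraMap_associated_pow_finrank {π : B} (hπ : Irreducible π) :
    ∃ a : A, Associated (algebraMap A B a) (π ^ finrank K L) := by
  refine ⟨_, (Associated.of_eq (prod_galRestrict_eq_norm A K L B π).symm).trans ?_⟩
  rw [← IsGalois.card_aut_eq_finrank, Nat.card_eq_fintype_card, ← card_univ, ← prod_const]
  refine Associated.prod _ _ _ fun σ _ ↦ IsDiscreteValuationRing.associated_of_irreducible B ?_ hπ
  exact (MulEquiv.irreducible_iff (galRestrict A K L B σ : B ≃* B)).mpr hπ

variable (K L) in
theorem algebraMap_dvd_pow_finrank [IsDomain A] [IsDiscreteValuationRing A] {ϖ : A}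
    (hϖ : Irreducible ϖ) {π : B} (hπ : Irreducible π) :
    algebraMap A B ϖ ∣ π ^ finrank K L := by
  obtain ⟨a, ha⟩ := exists_algebraMap_associated_pow_finrank A K L hπ
  have ha' : a ∈ maximalIdeal A := fun hu ↦ hπ.not_isUnit <|
    (isUnit_pow_iff finrank_pos.ne').mp (ha.isUnit_iff.mp (hu.map _))
  rw [(IsDiscreteValuationRing.irreducible_iff_uniformizer ϖ).mp hϖ,
    Ideal.mem_span_singleton] at ha'
  exact (map_dvd _ ha').trans ha.dvd

end Norm

theorem stmt6_general (p : ℕ) [Fact p.Prime]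
    (F E A B : Type*) [Field F] [Field E] [CommRing A] [CommRing B]
    -- E is a finite Galois extension of F, hence a finite extension of ℚ_p
    [Algebra F E] [FiniteDimensional F E] [IsGalois F E]
    -- A is the ring of integers 𝒪_F of F
    [Algebra ℤ_[p] A] [Algebra A F]
    [IsFractionRing A F]
    -- B is the ring of integers 𝒪_E of E
    [Algebra A B] [Algebra B E] [Algebra A E] [IsScalarTower A B E] [IsScalarTower A F E]
    [IsIntegralClosure B A E]
    -- the rings of integers are discrete valuation rings
    [IsDomain A] [IsDomain B] [IsIntegrallyClosed A]
    [IsDiscreteValuationRing A] [IsDiscreteValuationRing B]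
    [Module.Finite A B] [NoZeroSMulDivisors A B]
    -- eF = e_{F/ℚ_p} = v_F(p)
    (eF : ℕ)
    (heF₂ : (p : A) ∉ maximalIdeal A ^ (eF + 1)) :
    ∀ i : ℕ,
      (Module.finrank F E : ℝ) *
          (1 + (eF : ℝ) * Real.logb p (Module.finrank F E)) - 1 ≤ (i : ℝ) →
      ∀ σ : E ≃ₐ[F] E,
        (∀ x : B, galRestrict A F E B σ x - x ∈ maximalIdeal B ^ (i + 1)) → σ = 1 := by
  intro i hi σ hσ
  obtain ⟨ϖ, hϖ⟩ := IsDiscreteValuationRing.exists_irreducible A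
  obtain ⟨π, hπ⟩ := IsDiscreteValuationRing.exists_irreducible B
  have hσn : σ ^ finrank F E = 1 := IsGalois.card_aut_eq_finrank F E ▸ pow_card_eq_one'
  set n := finrank F E
  set a := n.factorization p
  have hn : n ≠ 0 := finrank_pos.ne'
  have hexp : n * (a * eF + 1) ≤ i + 1 := by
    have ha := Nat.factorization_le_logb (Fact.out : p.Prime) hn
    have : ((n * (a * eF + 1) : ℕ) : ℝ) ≤ i + 1 := by
      push_cast
      nlinarith [mul_le_mul_of_nonneg_left ha (by positivity : (0 : ℝ) ≤ n * eF)]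
    exact_mod_cast this
  have hnϖ : (n : A) * ϖ ∣ ϖ ^ (a * eF + 1) := by
    rw [pow_succ, pow_mul']
    refine mul_dvd_mul ?_ dvd_rfl
    exact (associated_pow_factorization_natCast hn).symm.dvd.trans <| pow_dvd_pow_of_dvd
      (IsDiscreteValuationRing.dvd_pow_of_notMem_maximalIdeal_pow_succ hϖ heF₂) a
  have hdvd : (n : B) * algebraMap A B ϖ ∣ π ^ (i + 1) :=
    calc (n : B) * algebraMap A B ϖ = algebraMap A B (n * ϖ) := by rw [map_mul, map_natCast]
      _ ∣ algebraMap A B ϖ ^ (a * eF + 1) := (map_dvd _ hnϖ).trans (map_pow _ _ _).dvd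
      _ ∣ (π ^ n) ^ (a * eF + 1) := pow_dvd_pow_of_dvd (algebraMap_dvd_pow_finrank F E hϖ hπ) _
      _ ∣ π ^ (i + 1) := (pow_mul π _ _).symm ▸ pow_dvd_pow π hexp
  suffices galRestrict A F E B σ = 1 from (galRestrict A F E B).injective (by rw [this, map_one])
  refine AlgEquiv.eq_one_of_natCast_mul_dvd_apply_sub_self _ (by rw [← map_pow, hσn, map_one])
    (AlgEquiv.commutes _ ϖ) ((isUnit_map_iff _ ϖ).not.mpr hϖ.not_isUnit)
    (ne_zero_of_dvd_ne_zero (pow_ne_zero _ hπ.ne_zero) hdvd) fun x ↦ hdvd.trans ?_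
  rw [← Ideal.mem_span_singleton, ← Ideal.span_singleton_pow,
    ← (IsDiscreteValuationRing.irreducible_iff_uniformizer π).mp hπ]
  exact hσ x

/-- Let `p` be a prime, `F` a finite extension of `ℚ_p`, and `E` a finite Galois extension
of `F`.  With `A = 𝒪_F` and `B = 𝒪_E` the rings of integers, and `eF = e_{F/ℚ_p} = v_F(p)`,
the `i`-th ramification group of `Gal(E/F)` in lower numbering is trivial for every integer
`i ≥ [E:F]·(1 + e_{F/ℚ_p}·log_p [E:F]) - 1`.  Concretely: if `σ ∈ Gal(E/F)` satisfies
`v_E(σ(x) - x) ≥ i + 1` for all `x ∈ 𝒪_E` (i.e. `σ(x) - x ∈ 𝔪_E^{i+1}`, where `σ` acts on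
`𝒪_E` via `galRestrict`), then `σ = 1`.  Equivalently, for every `σ ≠ 1` there is
`x ∈ 𝒪_E` with `v_E(σ(x) - x) ≤ [E:F]·(1 + e_{F/ℚ_p}·log_p [E:F]) - 1`. -/
theorem stmt6 (p : ℕ) [Fact p.Prime]
    (F E A B : Type*) [Field F] [Field E] [CommRing A] [CommRing B]
    -- F is a finite extension of ℚ_p
    [Algebra ℚ_[p] F] [FiniteDimensional ℚ_[p] F]
    -- E is a finite Galois extension of F, hence a finite extension of ℚ_p
    [Algebra F E] [FiniteDimensional F E] [IsGalois F E]
    [Algebra ℚ_[p] E] [IsScalarTower ℚ_[p] F E]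
    -- A is the ring of integers 𝒪_F of F
    [Algebra ℤ_[p] F] [IsScalarTower ℤ_[p] ℚ_[p] F]
    [Algebra ℤ_[p] A] [Algebra A F] [IsScalarTower ℤ_[p] A F]
    [IsFractionRing A F] [IsIntegralClosure A ℤ_[p] F]
    -- B is the ring of integers 𝒪_E of E
    [Algebra A B] [Algebra B E] [Algebra A E] [IsScalarTower A B E] [IsScalarTower A F E]
    [IsFractionRing B E] [IsIntegralClosure B A E]
    -- the rings of integers are discrete valuation rings
    [IsDomain A] [IsDomain B] [IsIntegrallyClosed A] [IsIntegrallyClosed B]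
    [IsDiscreteValuationRing A] [IsDiscreteValuationRing B]
    [IsDedekindDomain B] [Module.Finite A B] [NoZeroSMulDivisors A B]
    -- eF = e_{F/ℚ_p} = v_F(p)
    (eF : ℕ)
    (heF₁ : (p : A) ∈ maximalIdeal A ^ eF)
    (heF₂ : (p : A) ∉ maximalIdeal A ^ (eF + 1)) :
    ∀ i : ℕ,
      (Module.finrank F E : ℝ) *
          (1 + (eF : ℝ) * Real.logb p (Module.finrank F E)) - 1 ≤ (i : ℝ) →
      ∀ σ : E ≃ₐ[F] E,
        (∀ x : B, galRestrict A F E B σ x - x ∈ maximalIdeal B ^ (i + 1)) → σ = 1 :=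
  stmt6_general p F E A B eF heF₂
end

section
/- Let Φ : ℝ → ℂ be a Schwartz function whose Fourier transform Φ̂ vanishes outside the interval (−1, 1). Then ∫_ℝ Φ(x)·W(U)(x) dx = Φ̂(0), ∫_ℝ Φ(x)·W(USp)(x) dx = Φ̂(0) − Φ(0)/2, and ∫_ℝ Φ(x)·W(SO(even))(x) dx = Φ̂(0) + Φ(0)/2; that is, ∫_ℝ Φ(x)·(1 − sin(2πx)/(2πx)) dx = Φ̂(0) − Φ(0)/2 and ∫_ℝ Φ(x)·(1 + sin(2πx)/(2πx)) dx = Φ̂(0) + Φ(0)/2. -/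
open MeasureTheory
open scoped FourierTransform

/-- `sin(2πx)/(2πx)`, understood to equal `1` at `x = 0`. -/
noncomputable def sinc2pi (x : ℝ) : ℝ :=
  if x = 0 then 1 else Real.sin (2 * Real.pi * x) / (2 * Real.pi * x)

/-!
Because `Φ̂` vanishes outside `[-1, 1]`, `∫ Φ̂ = ∫ Φ̂ · 1_{[-1,1]}`, and self-adjointness of
the Fourier transform turns this into `∫ Φ · (1_{[-1,1]})^`, where
`(1_{[-1,1]})^(x) = 2 sin(2πx)/(2πx)`. Fourier inversion at `0` gives `∫ Φ̂ = Φ(0)`, so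
`∫ Φ(x) sin(2πx)/(2πx) dx = Φ(0)/2`; together with `Φ̂(0) = ∫ Φ` this yields all three
identities.
-/

open Set

lemma sinc2pi_eq_sinc (x : ℝ) : sinc2pi x = Real.sinc (2 * Real.pi * x) := by
  simp [sinc2pi, Real.sinc, Real.pi_ne_zero]

lemma continuous_sinc2pi : Continuous sinc2pi := by
  simp_rw [funext sinc2pi_eq_sinc]
  fun_prop

namespace Real

variable {V E : Type*} [NormedAddCommGroup V] [InnerProductSpace ℝ V] [FiniteDimensional ℝ V]
  [MeasurableSpace V] [BorelSpace V] [NormedAddCommGroup E] [NormedSpace ℂ E]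

lemma fourier_apply_zero (f : V → E) : 𝓕 f 0 = ∫ v, f v := by
  simp [fourier_eq]

lemma continuous_fourier_of_integrable {f : V → E} (hf : Integrable f) : Continuous (𝓕 f) :=
  VectorFourier.fourierIntegral_continuous continuous_fourierChar (innerSL ℝ).continuous₂ hf

lemma integral_fourier_eq_apply_zero [CompleteSpace E] {f : V → E} (hf : Integrable f)
    (hFf : Integrable (𝓕 f)) (h0 : ContinuousAt f 0) : ∫ ξ, 𝓕 f ξ = f 0 := by
  simpa [fourierInv_eq] using hf.fourierInv_fourier_eq hFf h0

lemma integral_fourier_smul_eq_of_integrable [CompleteSpace E] {f : V → ℂ} {g : V → E}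
    (hf : Integrable f) (hg : Integrable g) : ∫ ξ, 𝓕 f ξ • g ξ = ∫ x, f x • 𝓕 g x := by
  simpa using! VectorFourier.integral_fourierIntegral_smul_eq_flip (L := innerₗ V)
    continuous_fourierChar continuous_inner hf hg

end Real

lemma fourier_indicator_Icc {a : ℝ} (ha : 0 ≤ a) (x : ℝ) :
    𝓕 ((Icc (-a) a).indicator (1 : ℝ → ℂ)) x = 2 * a * Real.sinc (2 * Real.pi * a * x) := by
  have hinterval : 𝓕 ((Icc (-a) a).indicator (1 : ℝ → ℂ)) x
      = ∫ v in -a..a, Complex.exp ((-2 * Real.pi * x * Complex.I) * v) := by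
    rw [Real.fourier_real_eq_integral_exp_smul, intervalIntegral.integral_of_le (by linarith),
      ← integral_Icc_eq_integral_Ioc, ← integral_indicator measurableSet_Icc]
    congr 1 with v
    by_cases hv : v ∈ Icc (-a) a
    · simp [hv]; ring_nf
    · simp [hv]
  rw [hinterval]
  rcases eq_or_ne x 0 with rfl | hx
  · simp; ring
  rcases eq_or_ne a 0 with rfl | ha0
  · simp
  have hc : -2 * (Real.pi : ℂ) * x * Complex.I ≠ 0 := by simp [Real.pi_ne_zero, hx]
  rw [integral_exp_mul_complex hc, Real.sinc_of_ne_zero (by positivity)]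
  have hexp : ∀ s : ℝ, Complex.exp ((-2 * Real.pi * x * Complex.I) * s)
      = Complex.exp (-(2 * Real.pi * x * s : ℝ) * Complex.I) := fun s => by push_cast; ring_nf
  rw [hexp, hexp, Complex.exp_mul_I, Complex.exp_mul_I]
  have hxc : (x : ℂ) ≠ 0 := by exact_mod_cast hx
  have hac : (a : ℂ) ≠ 0 := by exact_mod_cast ha0
  push_cast
  simp only [mul_neg, neg_mul, neg_neg, Complex.cos_neg, Complex.sin_neg]
  field_simp
  ring_nf

lemma fourier_indicator_Icc_neg_one_one (x : ℝ) :
    𝓕 ((Icc (-1 : ℝ) 1).indicator (1 : ℝ → ℂ)) x = 2 * sinc2pi x := by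
  simp [fourier_indicator_Icc zero_le_one, sinc2pi_eq_sinc]

lemma MeasureTheory.Integrable.mul_sinc2pi {f : ℝ → ℂ} (hf : Integrable f) :
    Integrable (fun x ↦ f x * sinc2pi x) := by
  refine hf.mul_bdd (c := 1)
    (Complex.continuous_ofReal.comp continuous_sinc2pi).aestronglyMeasurable
    (ae_of_all _ fun x ↦ ?_)
  simpa [sinc2pi_eq_sinc] using Real.abs_sinc_le_one _

theorem integral_mul_sinc2pi_eq_of_fourier_eq_zero {f : ℝ → ℂ} (hf : Integrable f)
    (h0 : ContinuousAt f 0) (hsupp : ∀ y ∉ Icc (-1 : ℝ) 1, 𝓕 f y = 0) :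
    ∫ x, f x * sinc2pi x = f 0 / 2 := by
  have hFf : Integrable (𝓕 f) :=
    (Real.continuous_fourier_of_integrable hf).integrable_of_hasCompactSupport
      (HasCompactSupport.intro isCompact_Icc hsupp)
  have hcut : 𝓕 f = fun ξ ↦ 𝓕 f ξ • (Icc (-1 : ℝ) 1).indicator (1 : ℝ → ℂ) ξ := by
    ext ξ
    by_cases hξ : ξ ∈ Icc (-1 : ℝ) 1 <;> simp [hξ, hsupp]
  have hind : Integrable ((Icc (-1 : ℝ) 1).indicator (1 : ℝ → ℂ)) :=
    (integrable_indicator_iff measurableSet_Icc).2 (integrableOn_const (by simp))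
  have hinv := Real.integral_fourier_eq_apply_zero hf hFf h0
  rw [hcut, Real.integral_fourier_smul_eq_of_integrable hf hind] at hinv
  simp_rw [fourier_indicator_Icc_neg_one_one, smul_eq_mul, mul_left_comm _ (2 : ℂ),
    integral_const_mul] at hinv
  rw [← hinv]
  ring

/-- Let `Φ : ℝ → ℂ` be a Schwartz function whose Fourier transform `Φ̂` vanishes outside
`(-1, 1)`.  Then `∫ Φ(x) W(U)(x) dx = Φ̂(0)`,
`∫ Φ(x) W(USp)(x) dx = ∫ Φ(x)(1 - sin(2πx)/(2πx)) dx = Φ̂(0) - Φ(0)/2`, and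
`∫ Φ(x) W(SO(even))(x) dx = ∫ Φ(x)(1 + sin(2πx)/(2πx)) dx = Φ̂(0) + Φ(0)/2`. -/
theorem stmt10 (Φ : SchwartzMap ℝ ℂ)
    (hsupp : ∀ y : ℝ, y ∉ Set.Ioo (-1 : ℝ) 1 → 𝓕 (⇑Φ) y = 0) :
    (∫ x : ℝ, Φ x) = 𝓕 (⇑Φ) 0 ∧
    (∫ x : ℝ, Φ x * (1 - (sinc2pi x : ℂ))) = 𝓕 (⇑Φ) 0 - Φ 0 / 2 ∧
    (∫ x : ℝ, Φ x * (1 + (sinc2pi x : ℂ))) = 𝓕 (⇑Φ) 0 + Φ 0 / 2 := by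
  have hΦ : Integrable Φ := Φ.integrable
  have hsinc : ∫ x, Φ x * sinc2pi x = Φ 0 / 2 :=
    integral_mul_sinc2pi_eq_of_fourier_eq_zero hΦ Φ.continuous.continuousAt
      fun y hy ↦ hsupp y fun hy' ↦ hy (Ioo_subset_Icc_self hy')
  have hmean : ∫ x, Φ x = 𝓕 (⇑Φ) 0 := (Real.fourier_apply_zero _).symm
  simp_rw [mul_sub, mul_add, mul_one]
  rw [integral_sub hΦ hΦ.mul_sinc2pi, integral_add hΦ hΦ.mul_sinc2pi, hsinc, hmean]
  exact ⟨rfl, rfl, rfl⟩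
end
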